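/- Uhlmann's theorem for extensions: Let H_A, H_B be finite-dimensional complex Hilbert spaces, ρ_{AB} ∈ S(H_A ⊗ H_B), and σ_A ∈ S(H_A). Then there exists an extension σ_{AB} ∈ S(H_A ⊗ H_B) of σ_A (i.e., with partial trace over H_B equal to σ_A) such that F(ρ_A, σ_A) = F(ρ_{AB}, σ_{AB}), where ρ_A is the partial trace of ρ_{AB} over H_B. -/

import Mathlib

open scoped BigOperators ComplexOrder Matrix
attribute [local instance] Classical.propDecidable

noncomputable section

namespace RobustStein

variable {ι κ : Type*} [Fintype ι] [DecidableEq ι] [Fintype κ] [DecidableEq κ]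

/-- A density matrix: positive semidefinite with unit trace. -/
def IsState (ρ : Matrix ι ι ℂ) : Prop := ρ.PosSemidef ∧ ρ.trace = 1

/-- Positive semidefinite square root (junk value `0` off the PSD cone). -/
def psdSqrt (M : Matrix ι ι ℂ) : Matrix ι ι ℂ := if h : M.PosSemidef then
  (h.1.eigenvectorUnitary : Matrix ι ι ℂ) *
    Matrix.diagonal (fun i => ((Real.sqrt (h.1.eigenvalues i) : ℝ) : ℂ)) *
    (star h.1.eigenvectorUnitary : Matrix ι ι ℂ) else 0

/-- Trace norm `‖M‖₁ = tr √(MᴴM)`. -/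
def traceNorm (M : Matrix ι ι ℂ) : ℝ := (psdSqrt (M.conjTranspose * M)).trace.re

/-- Fidelity `F(ρ,σ) = ‖√ρ√σ‖₁²`. -/
def fidelity (ρ σ : Matrix ι ι ℂ) : ℝ := traceNorm (psdSqrt ρ * psdSqrt σ) ^ 2

/-- Purified distance. -/
def purifiedDist (ρ σ : Matrix ι ι ℂ) : ℝ := Real.sqrt (1 - fidelity ρ σ)

/-- Matrix logarithm via functional calculus on the support (junk `0` off Hermitian). -/
def matLog (M : Matrix ι ι ℂ) : Matrix ι ι ℂ :=
  if h : M.IsHermitian then h.cfc Real.log else 0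

/-- Support inclusion `supp ρ ⊆ supp σ`, expressed as kernel inclusion. -/
def suppLE (ρ σ : Matrix ι ι ℂ) : Prop := ∀ v : ι → ℂ, σ.mulVec v = 0 → ρ.mulVec v = 0

/-- Umegaki relative entropy `D(ρ‖σ)`, equal to `+∞` when the support condition fails. -/
def relEnt (ρ σ : Matrix ι ι ℂ) : EReal :=
  if suppLE ρ σ then (((ρ * (matLog ρ - matLog σ)).trace.re : ℝ) : EReal) else ⊤

/-- Relative entropy of resource `D(ρ‖M) = inf_{σ∈M} D(ρ‖σ)`. -/
def relEntSet (ρ : Matrix ι ι ℂ) (M : Set (Matrix ι ι ℂ)) : EReal := ⨅ σ ∈ M, relEnt ρ σ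

/-- The set of type II error probabilities for tests with type I error at most ε. -/
def betaSet (ε : ℝ) (ρ σ : Matrix ι ι ℂ) : Set ℝ :=
  { b | ∃ X : Matrix ι ι ℂ, X.PosSemidef ∧ ((1 : Matrix ι ι ℂ) - X).PosSemidef ∧
        1 - ε ≤ ((ρ * X).trace).re ∧ b = ((σ * X).trace).re }

/-- Hypothesis testing relative entropy `D_H^ε(ρ‖σ) = - log min β`. -/
def DH (ε : ℝ) (ρ σ : Matrix ι ι ℂ) : EReal :=
  if 0 < sInf (betaSet ε ρ σ) then ((- Real.log (sInf (betaSet ε ρ σ)) : ℝ) : EReal) else ⊤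

/-- Hypothesis testing relative entropy between sets of states. -/
def DHSet (ε : ℝ) (A B : Set (Matrix ι ι ℂ)) : EReal := ⨅ ρ ∈ A, ⨅ σ ∈ B, DH ε ρ σ

/-- Max-relative entropy `D_max(ρ‖σ) = inf {λ : ρ ≤ e^λ σ}` (inf over empty set is `⊤`). -/
def Dmax (ρ σ : Matrix ι ι ℂ) : EReal :=
  ⨅ (l : ℝ) (_ : (((Real.exp l : ℂ)) • σ - ρ).PosSemidef), (l : EReal)

/-- The ε-ball around ρ in purified distance. -/
def ball (ε : ℝ) (ρ : Matrix ι ι ℂ) : Set (Matrix ι ι ℂ) :=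
  { ρ' | IsState ρ' ∧ purifiedDist ρ ρ' ≤ ε }

/-- Smooth max-relative entropy. -/
def DmaxSmooth (ε : ℝ) (ρ σ : Matrix ι ι ℂ) : EReal := ⨅ ρ' ∈ ball ε ρ, Dmax ρ' σ

/-- Smooth max-relative entropy between sets of states. -/
def DmaxSmoothSet (ε : ℝ) (A B : Set (Matrix ι ι ℂ)) : EReal :=
  ⨅ ρ ∈ A, ⨅ σ ∈ B, DmaxSmooth ε ρ σ

/-- n-fold tensor (Kronecker) power `ρ^{⊗n}` on `H^{⊗n}` with index type `Fin n → κ`. -/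
def tpow (ρ : Matrix κ κ ℂ) (n : ℕ) : Matrix (Fin n → κ) (Fin n → κ) ℂ :=
  Matrix.of fun x y => ∏ i, ρ (x i) (y i)

/-- Tensor product of operators on `H^{⊗n}` and `H^{⊗m}`. -/
def kron {n m : ℕ} (ρ : Matrix (Fin n → κ) (Fin n → κ) ℂ)
    (σ : Matrix (Fin m → κ) (Fin m → κ) ℂ) :
    Matrix (Fin (n + m) → κ) (Fin (n + m) → κ) ℂ :=
  Matrix.of fun x y =>
    ρ (fun i => x (Fin.castAdd m i)) (fun i => y (Fin.castAdd m i)) *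
    σ (fun j => x (Fin.natAdd n j)) (fun j => y (Fin.natAdd n j))

/-- Action of a permutation of the tensor factors: `π M π†`. -/
def permAct {n : ℕ} (π : Equiv.Perm (Fin n)) (M : Matrix (Fin n → κ) (Fin n → κ) ℂ) :
    Matrix (Fin n → κ) (Fin n → κ) ℂ :=
  Matrix.of fun x y => M (x ∘ π) (y ∘ π)

/-- Partial trace over the last tensor factor. -/
def ptraceLast {n : ℕ} (M : Matrix (Fin (n + 1) → κ) (Fin (n + 1) → κ) ℂ) :
    Matrix (Fin n → κ) (Fin n → κ) ℂ :=
  Matrix.of fun x y => ∑ a : κ, M (Fin.snoc x a) (Fin.snoc y a)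

/-- Partial trace over the last `k` tensor factors. -/
def ptraceRight (m k : ℕ) (M : Matrix (Fin (m + k) → κ) (Fin (m + k) → κ) ℂ) :
    Matrix (Fin m → κ) (Fin m → κ) ℂ :=
  Matrix.of fun x y => ∑ a : Fin k → κ, M (Fin.append x a) (Fin.append y a)

/-- Marginal of a state on `H^{⊗n}` on the `i`-th tensor factor. -/
def marginalAt {n : ℕ} (i : Fin n) (M : Matrix (Fin n → κ) (Fin n → κ) ℂ) : Matrix κ κ ℂ :=
  Matrix.of fun a b => ∑ x : Fin n → κ, if x i = a then M x (Function.update x i b) else 0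

/-- Replacer channel on the `i`-th tensor factor: `R_i^{(ω)}(M) = tr_i[M] ⊗_i ω`. -/
def replaceAt {n : ℕ} (i : Fin n) (ω : Matrix κ κ ℂ)
    (M : Matrix (Fin n → κ) (Fin n → κ) ℂ) : Matrix (Fin n → κ) (Fin n → κ) ℂ :=
  Matrix.of fun x y =>
    ω (x i) (y i) * ∑ a : κ, M (Function.update x i a) (Function.update y i a)

/-- The partial trace over the `i`-th tensor factor vanishes. -/
def ptrAtZero {n : ℕ} (i : Fin n) (X : Matrix (Fin n → κ) (Fin n → κ) ℂ) : Prop :=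
  ∀ x y : Fin n → κ, ∑ a : κ, X (Function.update x i a) (Function.update y i a) = 0

/-- Quantum Wasserstein distance of order 1. -/
def W1 {n : ℕ} (ω τ : Matrix (Fin n → κ) (Fin n → κ) ℂ) : ℝ :=
  sInf { c | ∃ X : Fin n → Matrix (Fin n → κ) (Fin n → κ) ℂ,
      (∀ i, (X i).IsHermitian) ∧ (∀ i, ptrAtZero i (X i)) ∧ ω - τ = ∑ i, X i ∧
      c = (1 / 2) * ∑ i, traceNorm (X i) }

/-- Binary entropy (with natural logarithm). -/
def binEnt (x : ℝ) : ℝ := -(x * Real.log x) - (1 - x) * Real.log (1 - x)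

/-- Smallest eigenvalue of a Hermitian matrix (junk `0` otherwise). -/
def lamMin (M : Matrix ι ι ℂ) : ℝ := if h : M.IsHermitian then ⨅ i, h.eigenvalues i else 0

/-- The family `V(H^{⊗n}, θ^{⊗m})` of vectors that are `θ` on `m` positions. -/
def vecSet (θ : κ → ℂ) (n m : ℕ) : Set ((Fin n → κ) → ℂ) :=
  { ψ | ∃ S : Finset (Fin n), S.card = m ∧
      ∃ Ω : ({ j : Fin n // j ∉ S } → κ) → ℂ,
        ψ = fun x => (∏ i ∈ S, θ (x i)) * Ω (fun j => x j.1) }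

/-- The support of the matrix ρ is contained in the span of `V`. -/
def suppInSpan (ρ : Matrix ι ι ℂ) (V : Set (ι → ℂ)) : Prop :=
  LinearMap.range (Matrix.toLin' ρ) ≤ Submodule.span ℂ V

/-- `θ ∈ H_A ⊗ H_E` is a (normalized) purification of `σ`. -/
def Purifies {dA dE : ℕ} (θ : Fin dA × Fin dE → ℂ) (σ : Matrix (Fin dA) (Fin dA) ℂ) : Prop :=
  (∑ p, Complex.normSq (θ p)) = 1 ∧
  ∀ a b, (∑ e, θ (a, e) * (starRingEnd ℂ) (θ (b, e))) = σ a b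

/-- Marginal on the A systems of a state on `(H_A ⊗ H_E)^{⊗n}`. -/
def margA {dA dE n : ℕ}
    (ρext : Matrix (Fin n → Fin dA × Fin dE) (Fin n → Fin dA × Fin dE) ℂ) :
    Matrix (Fin n → Fin dA) (Fin n → Fin dA) ℂ :=
  Matrix.of fun x y => ∑ e : Fin n → Fin dE,
    ρext (fun i => (x i, e i)) (fun i => (y i, e i))

/-- A generalized (n,r)-almost-iid state along `σA` (no permutation invariance required). -/
def IsGenAlmostIID {dA : ℕ} (n r : ℕ) (σA : Matrix (Fin dA) (Fin dA) ℂ)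
    (ρ : Matrix (Fin n → Fin dA) (Fin n → Fin dA) ℂ) : Prop :=
  IsState ρ ∧ ∃ (dE : ℕ) (θ : Fin dA × Fin dE → ℂ)
    (ρext : Matrix (Fin n → Fin dA × Fin dE) (Fin n → Fin dA × Fin dE) ℂ),
    Purifies θ σA ∧ IsState ρext ∧ margA ρext = ρ ∧
    suppInSpan ρext (vecSet θ n (n - r))

/-- An (n,r)-almost-iid state along `σA`. -/
def IsAlmostIID {dA : ℕ} (n r : ℕ) (σA : Matrix (Fin dA) (Fin dA) ℂ)
    (ρ : Matrix (Fin n → Fin dA) (Fin n → Fin dA) ℂ) : Prop :=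
  IsState ρ ∧ ∃ (dE : ℕ) (θ : Fin dA × Fin dE → ℂ)
    (ρext : Matrix (Fin n → Fin dA × Fin dE) (Fin n → Fin dA × Fin dE) ℂ),
    Purifies θ σA ∧ IsState ρext ∧
    (∀ π : Equiv.Perm (Fin n), ∀ x y, ρext (x ∘ π) (y ∘ π) = ρext x y) ∧
    margA ρext = ρ ∧
    suppInSpan ρext (vecSet θ n (n - r))

/-- The set `S^n(H, σ^{⊗(n-r)})` of (n,r)-almost-iid states along σ. -/
def almostIIDSet (dA n r : ℕ) (σA : Matrix (Fin dA) (Fin dA) ℂ) :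
    Set (Matrix (Fin n → Fin dA) (Fin n → Fin dA) ℂ) :=
  { ρ | IsAlmostIID n r σA ρ }

/-- The set `S̄^n(H, σ^{⊗(n-r)})` of generalized (n,r)-almost-iid states along σ. -/
def genAlmostIIDSet (dA n r : ℕ) (σA : Matrix (Fin dA) (Fin dA) ℂ) :
    Set (Matrix (Fin n → Fin dA) (Fin n → Fin dA) ℂ) :=
  { ρ | IsGenAlmostIID n r σA ρ }

/-- The Brandão–Plenio axioms for a family of sets of free states. -/
structure BPAxioms (d : ℕ)
    (M : ∀ n : ℕ, Set (Matrix (Fin n → Fin d) (Fin n → Fin d) ℂ)) : Prop where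
  states : ∀ n, ∀ ρ ∈ M n, IsState ρ
  convex : ∀ n, Convex ℝ (M n)
  closed : ∀ n, IsClosed (M n)
  full_rank : ∃ ω ∈ M 1, Matrix.PosDef ω
  perm : ∀ n (π : Equiv.Perm (Fin n)), ∀ ρ ∈ M n, permAct π ρ ∈ M n
  ptrace : ∀ n, ∀ ρ ∈ M (n + 1), ptraceLast ρ ∈ M n
  tensor : ∀ n m, ∀ ρ ∈ M n, ∀ σ ∈ M m, kron ρ σ ∈ M (n + m)

/-- The tensor product `E ⊗ id_m` of a linear map on matrices with the identity. -/
def tensorId (E : Matrix ι ι ℂ →ₗ[ℂ] Matrix κ κ ℂ) (m : ℕ)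
    (M : Matrix (ι × Fin m) (ι × Fin m) ℂ) : Matrix (κ × Fin m) (κ × Fin m) ℂ :=
  Matrix.of fun p q => E (Matrix.of fun a b => M (a, p.2) (b, q.2)) p.1 q.1

/-- Partial trace over the second (B) factor. -/
def ptraceB {dA dB : ℕ} (M : Matrix (Fin dA × Fin dB) (Fin dA × Fin dB) ℂ) :
    Matrix (Fin dA) (Fin dA) ℂ :=
  Matrix.of fun a a' => ∑ b, M (a, b) (a', b)

/-- Partial trace over the first (A) factor. -/
def ptraceA {dA dB : ℕ} (M : Matrix (Fin dA × Fin dB) (Fin dA × Fin dB) ℂ) :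
    Matrix (Fin dB) (Fin dB) ℂ :=
  Matrix.of fun b b' => ∑ a, M (a, b) (a, b')


/-! Uhlmann's theorem in matrix form: if `R Rᴴ = ρ`, then `‖√ρ √σ‖₁` is the maximum of
`|tr (Rᴴ T)|` over all `T` with `T Tᴴ = σ`, both bounds coming from polar decompositions.
A purification `R` of `ρ_AB` with environment `E` is also a purification of `ρ_A` with
environment `B ⊗ E`. An optimal purification `T` of `σ_A` against it, read back as an operator
on `A ⊗ B ⊗ E`, gives `σ_AB := T Tᴴ` with `√F(ρ_A, σ_A) = tr (Rᴴ T) ≤ √F(ρ_AB, σ_AB)`; the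
reverse inequality is the monotonicity of the fidelity under the partial trace. -/

open Matrix
open scoped MatrixOrder

section SquareRoot

variable {n : Type*} [Fintype n] [DecidableEq n] {M : Matrix n n ℂ}

lemma psdSqrt_eq_isHermitian_cfc (h : M.PosSemidef) : psdSqrt M = h.1.cfc Real.sqrt :=
  dif_pos h

lemma psdSqrt_eq_sqrt (h : M.PosSemidef) : psdSqrt M = CFC.sqrt M := by
  rw [CFC.sqrt_eq_real_sqrt M (nonneg_iff_posSemidef.2 h), cfcₙ_eq_cfc, h.1.cfc_eq]
  exact psdSqrt_eq_isHermitian_cfc h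

lemma posSemidef_psdSqrt (h : M.PosSemidef) : (psdSqrt M).PosSemidef := by
  rw [psdSqrt_eq_sqrt h, ← nonneg_iff_posSemidef]
  exact CFC.sqrt_nonneg M

lemma psdSqrt_mul_self (h : M.PosSemidef) : psdSqrt M * psdSqrt M = M := by
  rw [psdSqrt_eq_sqrt h]
  exact CFC.sqrt_mul_sqrt_self M (nonneg_iff_posSemidef.2 h)

lemma conjTranspose_psdSqrt (h : M.PosSemidef) : (psdSqrt M)ᴴ = psdSqrt M :=
  (posSemidef_psdSqrt h).1

lemma ofReal_traceNorm (M : Matrix n n ℂ) : (traceNorm M : ℂ) = (psdSqrt (Mᴴ * M)).trace :=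
  (Complex.eq_re_of_ofReal_le
    (posSemidef_psdSqrt (posSemidef_conjTranspose_mul_self M)).trace_nonneg).symm

lemma traceNorm_nonneg (M : Matrix n n ℂ) : 0 ≤ traceNorm M :=
  (Complex.nonneg_iff.1
    (posSemidef_psdSqrt (posSemidef_conjTranspose_mul_self M)).trace_nonneg).1

end SquareRoot

lemma norm_trace_conjTranspose_mul_le {m n : Type*} [Fintype m] [Fintype n] (X Y : Matrix m n ℂ) :
    ‖(Xᴴ * Y).trace‖ ≤ √(Xᴴ * X).trace.re * √(Yᴴ * Y).trace.re := by
  let vec (Z : Matrix m n ℂ) : EuclideanSpace ℂ (m × n) := WithLp.toLp 2 fun p => Z p.1 p.2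
  have trace_eq_inner (Z Z' : Matrix m n ℂ) : (Zᴴ * Z').trace = inner ℂ (vec Z) (vec Z') := by
    simp only [vec, EuclideanSpace.inner_toLp_toLp, trace, diag, mul_apply, conjTranspose_apply,
      dotProduct, Fintype.sum_prod_type, Pi.star_apply]
    rw [Finset.sum_comm]
    exact Finset.sum_congr rfl fun _ _ => Finset.sum_congr rfl fun _ _ => mul_comm _ _
  have := norm_inner_le_norm (𝕜 := ℂ) (vec X) (vec Y)
  rwa [norm_eq_sqrt_re_inner (𝕜 := ℂ) (vec X), norm_eq_sqrt_re_inner (𝕜 := ℂ) (vec Y),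
    ← trace_eq_inner, ← trace_eq_inner, ← trace_eq_inner] at this

section Purification

variable {n e : Type*} [Fintype n] [DecidableEq n] [Fintype e]

lemma exists_isometry_mul_diagonal (f : n ↪ e) (C : Matrix e n ℂ) (s : n → ℝ)
    (hC : Cᴴ * C = diagonal fun j => ((s j ^ 2 : ℝ) : ℂ)) :
    ∃ W : Matrix e n ℂ, Wᴴ * W = 1 ∧ C = W * diagonal fun j => (s j : ℂ) := by
  let col (j : n) : EuclideanSpace ℂ e := WithLp.toLp 2 fun x => C x j
  have inner_col (i j : n) : inner ℂ (col i) (col j) = (Cᴴ * C) i j := by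
    simp only [col, EuclideanSpace.inner_toLp_toLp, dotProduct, mul_apply, conjTranspose_apply]
    exact Finset.sum_congr rfl fun x _ => mul_comm _ _
  let w (j : n) : EuclideanSpace ℂ e := ((s j : ℂ)⁻¹) • col j
  let S : Set e := f '' {j | s j ≠ 0}
  have hw : Orthonormal ℂ (S.domRestrict (Function.extend f w 0)) := by
    rw [orthonormal_iff_ite]
    rintro ⟨_, i, hi, rfl⟩ ⟨_, j, hj, rfl⟩
    simp only [Set.domRestrict_apply, f.injective.extend_apply, w, inner_smul_left,
      inner_smul_right, inner_col, hC, diagonal_apply]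
    rcases eq_or_ne i j with rfl | hij
    · have : (s i : ℂ) ≠ 0 := Complex.ofReal_ne_zero.2 hi
      simp only [if_true, map_inv₀, Complex.conj_ofReal]
      push_cast
      field_simp
    · simp [Subtype.ext_iff, hij]
  obtain ⟨b, hb⟩ := hw.exists_orthonormalBasis_extension_of_card_eq (by simp)
  refine ⟨of fun x j => b (f j) x, ?_, ?_⟩
  · ext i j
    have := orthonormal_iff_ite.1 (b.orthonormal.comp f f.injective) i j
    simp only [Function.comp_apply, EuclideanSpace.inner_eq_star_dotProduct, dotProduct] at this
    simp only [mul_apply, conjTranspose_apply, of_apply, one_apply, ← this]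
    exact Finset.sum_congr rfl fun x _ => mul_comm _ _
  · ext x j
    rw [mul_diagonal, of_apply]
    by_cases hj : s j = 0
    · have hcol : col j = 0 := by
        rw [← inner_self_eq_zero (𝕜 := ℂ), inner_col, hC, diagonal_apply_eq, hj]
        simp
      simpa [hj] using congrFun (congrArg WithLp.ofLp hcol) x
    · have hbj : b (f j) = w j := by
        rw [hb (f j) ⟨j, hj, rfl⟩, f.injective.extend_apply]
      have : (s j : ℂ) ≠ 0 := Complex.ofReal_ne_zero.2 hj
      simp only [hbj, w, col, PiLp.smul_apply, smul_eq_mul]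
      field_simp

lemma exists_isometry_mul_psdSqrt (f : n ↪ e) (B : Matrix e n ℂ) :
    ∃ V : Matrix e n ℂ, Vᴴ * V = 1 ∧ B = V * psdSqrt (Bᴴ * B) := by
  have hG : (Bᴴ * B).PosSemidef := posSemidef_conjTranspose_mul_self B
  have hUU := Unitary.coe_star_mul_self hG.1.eigenvectorUnitary
  have hUU' := Unitary.coe_mul_star_self hG.1.eigenvectorUnitary
  have hdiag := hG.1.conjStarAlgAut_star_eigenvectorUnitary
  have hsqrt := psdSqrt_eq_isHermitian_cfc hG
  simp only [IsHermitian.cfc, Unitary.conjStarAlgAut_apply, Unitary.coe_star,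
    star_eq_conjTranspose, conjTranspose_conjTranspose] at hUU hUU' hdiag hsqrt
  set U : Matrix n n ℂ := ↑hG.1.eigenvectorUnitary
  have hBU : (B * U)ᴴ * (B * U) = diagonal fun j => ((√(hG.1.eigenvalues j) ^ 2 : ℝ) : ℂ) := by
    rw [conjTranspose_mul, Matrix.mul_assoc, ← Matrix.mul_assoc Bᴴ, ← Matrix.mul_assoc, hdiag]
    simp [Real.sq_sqrt (hG.eigenvalues_nonneg _), Function.comp_def]
  obtain ⟨W, hW, hBUW⟩ := exists_isometry_mul_diagonal f (B * U) _ hBU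
  refine ⟨W * Uᴴ, ?_, ?_⟩
  · rw [conjTranspose_mul, conjTranspose_conjTranspose, Matrix.mul_assoc, ← Matrix.mul_assoc Wᴴ,
      hW, Matrix.one_mul, hUU']
  · rw [hsqrt, ← Matrix.mul_assoc, Matrix.mul_assoc W, ← Matrix.mul_assoc Uᴴ, hUU, Matrix.one_mul]
    calc B = B * U * Uᴴ := by rw [Matrix.mul_assoc, hUU', Matrix.mul_one]
      _ = _ := by rw [hBUW]; rfl

lemma norm_trace_mul_conjTranspose_mul_le {H : Matrix n n ℂ} (hH : H.PosSemidef)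
    {V W : Matrix e n ℂ} (hV : Vᴴ * V = 1) (hW : Wᴴ * W = 1) :
    ‖(H * (Vᴴ * W)).trace‖ ≤ H.trace.re := by
  set K := psdSqrt H
  have hK : Kᴴ = K := conjTranspose_psdSqrt hH
  have hKK : K * K = H := psdSqrt_mul_self hH
  have gram {X : Matrix e n ℂ} (hX : Xᴴ * X = 1) : (X * K)ᴴ * (X * K) = H := by
    rw [conjTranspose_mul, hK, Matrix.mul_assoc, ← Matrix.mul_assoc Xᴴ, hX, Matrix.one_mul, hKK]
  have htrace : (H * (Vᴴ * W)).trace = ((V * K)ᴴ * (W * K)).trace :=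
    calc (H * (Vᴴ * W)).trace = (K * (K * (Vᴴ * W))).trace := by rw [← hKK, Matrix.mul_assoc]
      _ = (K * (Vᴴ * W) * K).trace := trace_mul_comm _ _
      _ = ((V * K)ᴴ * (W * K)).trace := by
        rw [conjTranspose_mul, hK]
        simp only [Matrix.mul_assoc]
  have hH0 : 0 ≤ H.trace.re := (Complex.nonneg_iff.1 hH.trace_nonneg).1
  calc ‖(H * (Vᴴ * W)).trace‖ ≤ √H.trace.re * √H.trace.re := by
        simpa only [htrace, gram hV, gram hW] using norm_trace_conjTranspose_mul_le (V * K) (W * K)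
    _ = H.trace.re := Real.mul_self_sqrt hH0

lemma norm_trace_mul_le_traceNorm (M : Matrix n n ℂ) {V W : Matrix e n ℂ} (hV : Vᴴ * V = 1)
    (hW : Wᴴ * W = 1) : ‖(M * (Vᴴ * W)).trace‖ ≤ traceNorm M := by
  obtain ⟨U, hU, hM⟩ := exists_isometry_mul_psdSqrt (Function.Embedding.refl n) M
  have hWU : (W * U)ᴴ * (W * U) = 1 := by
    rw [conjTranspose_mul, Matrix.mul_assoc, ← Matrix.mul_assoc Wᴴ, hW, Matrix.one_mul, hU]
  calc ‖(M * (Vᴴ * W)).trace‖ = ‖(psdSqrt (Mᴴ * M) * (Vᴴ * (W * U))).trace‖ := by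
        conv_lhs => rw [hM, Matrix.mul_assoc, trace_mul_comm]
        simp only [Matrix.mul_assoc]
    _ ≤ traceNorm M :=
        norm_trace_mul_conjTranspose_mul_le (posSemidef_psdSqrt
          (posSemidef_conjTranspose_mul_self M)) hV hWU

lemma norm_trace_conjTranspose_mul_le_traceNorm (f : n ↪ e) {ρ σ : Matrix n n ℂ}
    {R T : Matrix n e ℂ} (hR : R * Rᴴ = ρ) (hT : T * Tᴴ = σ) :
    ‖(Rᴴ * T).trace‖ ≤ traceNorm (psdSqrt ρ * psdSqrt σ) := by
  obtain ⟨V, hV, hRV⟩ := exists_isometry_mul_psdSqrt f Rᴴ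
  obtain ⟨W, hW, hTW⟩ := exists_isometry_mul_psdSqrt f Tᴴ
  rw [conjTranspose_conjTranspose, hR] at hRV
  rw [conjTranspose_conjTranspose, hT] at hTW
  have hT' : T = psdSqrt σ * Wᴴ := by
    rw [← conjTranspose_conjTranspose T, hTW, conjTranspose_mul,
      conjTranspose_psdSqrt (hT ▸ posSemidef_self_mul_conjTranspose T)]
  calc ‖(Rᴴ * T).trace‖ = ‖(psdSqrt ρ * psdSqrt σ * (Wᴴ * V)).trace‖ := by
        rw [hRV, hT', Matrix.mul_assoc, trace_mul_comm]
        simp only [Matrix.mul_assoc]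
    _ ≤ _ := norm_trace_mul_le_traceNorm _ hW hV

lemma exists_trace_conjTranspose_mul_eq_traceNorm (f : n ↪ e) {ρ σ : Matrix n n ℂ}
    {R : Matrix n e ℂ} (hR : R * Rᴴ = ρ) (hσ : σ.PosSemidef) :
    ∃ T : Matrix n e ℂ, T * Tᴴ = σ ∧ (Rᴴ * T).trace = traceNorm (psdSqrt ρ * psdSqrt σ) := by
  have hρ : ρ.PosSemidef := hR ▸ posSemidef_self_mul_conjTranspose R
  obtain ⟨V, hV, hB⟩ := exists_isometry_mul_psdSqrt f (Rᴴ * psdSqrt σ)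
  -- `tr (Rᴴ √σ Vᴴ) = tr |Rᴴ √σ|`, and `Rᴴ √σ` has the same modulus as `√ρ √σ`
  have hBM : (Rᴴ * psdSqrt σ)ᴴ * (Rᴴ * psdSqrt σ) =
      (psdSqrt ρ * psdSqrt σ)ᴴ * (psdSqrt ρ * psdSqrt σ) := by
    simp only [conjTranspose_mul, conjTranspose_conjTranspose, conjTranspose_psdSqrt hρ,
      conjTranspose_psdSqrt hσ, Matrix.mul_assoc]
    rw [← Matrix.mul_assoc (psdSqrt ρ), psdSqrt_mul_self hρ, ← hR, Matrix.mul_assoc]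
  refine ⟨psdSqrt σ * Vᴴ, ?_, ?_⟩
  · rw [conjTranspose_mul, conjTranspose_conjTranspose, conjTranspose_psdSqrt hσ,
      Matrix.mul_assoc, ← Matrix.mul_assoc Vᴴ, hV, Matrix.one_mul, psdSqrt_mul_self hσ]
  · rw [hBM] at hB
    rw [ofReal_traceNorm, ← Matrix.mul_assoc, hB, trace_mul_comm, ← Matrix.mul_assoc, hV,
      Matrix.one_mul]

end Purification

section Bipartite

variable {dA dB : ℕ}

/-- Moves the `B` index of a purification of a state on `A ⊗ B` into its environment. -/
def regroup {α β γ : Type*} (X : Matrix (α × β) γ ℂ) : Matrix α (β × γ) ℂ :=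
  of fun a p => X (a, p.1) p.2

lemma regroup_surjective {α β γ : Type*} :
    Function.Surjective (regroup : Matrix (α × β) γ ℂ → Matrix α (β × γ) ℂ) :=
  fun T => ⟨of fun p c => T p.1 (p.2, c), rfl⟩

lemma trace_conjTranspose_regroup_mul_regroup {α β γ : Type*} [Fintype α] [Fintype β]
    [Fintype γ] (X Y : Matrix (α × β) γ ℂ) :
    ((regroup X)ᴴ * regroup Y).trace = (Xᴴ * Y).trace := by
  simp only [regroup, trace, diag, mul_apply, conjTranspose_apply, of_apply,
    Fintype.sum_prod_type]
  rw [Finset.sum_comm]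
  exact Finset.sum_congr rfl fun _ _ => Finset.sum_comm

lemma regroup_mul_conjTranspose_regroup {γ : Type*} [Fintype γ]
    (X Y : Matrix (Fin dA × Fin dB) γ ℂ) :
    regroup X * (regroup Y)ᴴ = ptraceB (X * Yᴴ) := by
  ext a a'
  simp only [regroup, ptraceB, mul_apply, conjTranspose_apply, of_apply, Fintype.sum_prod_type]

lemma trace_ptraceB (M : Matrix (Fin dA × Fin dB) (Fin dA × Fin dB) ℂ) :
    (ptraceB M).trace = M.trace := by
  simp only [trace, diag, ptraceB, of_apply, Fintype.sum_prod_type]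

variable [NeZero dB] {ρ : Matrix (Fin dA × Fin dB) (Fin dA × Fin dB) ℂ}

lemma exists_ptraceB_eq_fidelity_le (hρ : ρ.PosSemidef) {σA : Matrix (Fin dA) (Fin dA) ℂ}
    (hσA : σA.PosSemidef) :
    ∃ σ : Matrix (Fin dA × Fin dB) (Fin dA × Fin dB) ℂ,
      σ.PosSemidef ∧ ptraceB σ = σA ∧ fidelity (ptraceB ρ) σA ≤ fidelity ρ σ := by
  set R := psdSqrt ρ
  have hR : R * Rᴴ = ρ := by rw [conjTranspose_psdSqrt hρ, psdSqrt_mul_self hρ]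
  have hRA : regroup R * (regroup R)ᴴ = ptraceB ρ := by
    rw [regroup_mul_conjTranspose_regroup, hR]
  obtain ⟨T, hT, hRT⟩ := exists_trace_conjTranspose_mul_eq_traceNorm
    ((Function.Embedding.sectL _ 0).trans (Function.Embedding.sectR 0 _)) hRA hσA
  obtain ⟨φ, rfl⟩ := regroup_surjective T
  refine ⟨φ * φᴴ, posSemidef_self_mul_conjTranspose φ, ?_, ?_⟩
  · rw [← regroup_mul_conjTranspose_regroup, hT]
  · have hle := norm_trace_conjTranspose_mul_le_traceNorm (Function.Embedding.refl _) hR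
      (rfl : φ * φᴴ = _)
    rw [← trace_conjTranspose_regroup_mul_regroup, hRT, Complex.norm_real,
      Real.norm_of_nonneg (traceNorm_nonneg _)] at hle
    exact pow_le_pow_left₀ (traceNorm_nonneg _) hle 2

lemma fidelity_le_fidelity_ptraceB (hρ : ρ.PosSemidef)
    {σ : Matrix (Fin dA × Fin dB) (Fin dA × Fin dB) ℂ} (hσ : σ.PosSemidef) :
    fidelity ρ σ ≤ fidelity (ptraceB ρ) (ptraceB σ) := by
  set R := psdSqrt ρ
  have hR : R * Rᴴ = ρ := by rw [conjTranspose_psdSqrt hρ, psdSqrt_mul_self hρ]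
  obtain ⟨T, hT, hRT⟩ :=
    exists_trace_conjTranspose_mul_eq_traceNorm (Function.Embedding.refl _) hR hσ
  have hle := norm_trace_conjTranspose_mul_le_traceNorm
    ((Function.Embedding.sectL _ 0).trans (Function.Embedding.sectR 0 _))
    (regroup_mul_conjTranspose_regroup R R) (regroup_mul_conjTranspose_regroup T T)
  rw [trace_conjTranspose_regroup_mul_regroup, hRT, hR, hT, Complex.norm_real,
    Real.norm_of_nonneg (traceNorm_nonneg _)] at hle
  exact pow_le_pow_left₀ (traceNorm_nonneg _) hle 2

end Bipartite

/-- **Uhlmann's theorem for extensions**: any state `σ_A` admits an extension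
`σ_{AB}` with `F(ρ_A, σ_A) = F(ρ_{AB}, σ_{AB})`. -/
theorem uhlmann_extension
    (dA dB : ℕ)
    (ρAB : Matrix (Fin dA × Fin dB) (Fin dA × Fin dB) ℂ) (hρ : IsState ρAB)
    (σA : Matrix (Fin dA) (Fin dA) ℂ) (hσ : IsState σA) :
    ∃ σAB : Matrix (Fin dA × Fin dB) (Fin dA × Fin dB) ℂ,
      IsState σAB ∧ ptraceB σAB = σA ∧
      fidelity (ptraceB ρAB) σA = fidelity ρAB σAB := by
  have : NeZero dB := ⟨by rintro rfl; simpa [trace] using hρ.2⟩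
  obtain ⟨σAB, hσAB, hmarg, hle⟩ := exists_ptraceB_eq_fidelity_le hρ.1 hσ.1
  refine ⟨σAB, ⟨hσAB, by rw [← trace_ptraceB, hmarg, hσ.2]⟩, hmarg, le_antisymm hle ?_⟩
  simpa only [hmarg] using fidelity_le_fidelity_ptraceB hρ.1 hσAB

end RobustStein
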